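/- With notation as in the previous context (β = 1, unit mass, f_P standard Gaussian), for any smooth f depending only on q one has Π A_{Lan} (Id − Π) A_{Lan} f = A_{Smol} f, where A_{Smol} = Δ_q − ∇_q V · ∇_q. -/

import Mathlib

noncomputable section

/-- Partial derivative of `F : (q,p) ↦ ℝ` in the `i`-th position direction. -/
def pq {d : ℕ} (i : Fin d) (F : (Fin d → ℝ) × (Fin d → ℝ) → ℝ)
    (x : (Fin d → ℝ) × (Fin d → ℝ)) : ℝ :=
  fderiv ℝ F x (Pi.single i 1, 0)

/-- Partial derivative of `F : (q,p) ↦ ℝ` in the `i`-th momentum direction. -/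
def pp {d : ℕ} (i : Fin d) (F : (Fin d → ℝ) × (Fin d → ℝ) → ℝ)
    (x : (Fin d → ℝ) × (Fin d → ℝ)) : ℝ :=
  fderiv ℝ F x (0, Pi.single i 1)

/-- Partial derivative on configuration space. -/
def pd {d : ℕ} (i : Fin d) (g : (Fin d → ℝ) → ℝ) (q : Fin d → ℝ) : ℝ :=
  fderiv ℝ g q (Pi.single i 1)

/-- Backward Langevin generator (β = 1, unit mass, friction `ε⁻¹`). -/
def ALan {d : ℕ} (ε : ℝ) (V : (Fin d → ℝ) → ℝ)
    (F : (Fin d → ℝ) × (Fin d → ℝ) → ℝ)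
    (x : (Fin d → ℝ) × (Fin d → ℝ)) : ℝ :=
  (∑ i, x.2 i * pq i F x) - (∑ i, pd i V x.1 * pp i F x)
    + ε⁻¹ * ((∑ i, pp i (pp i F) x) - ∑ i, x.2 i * pp i F x)

/-- Standard Gaussian momentum density. -/
def fP {d : ℕ} (p : Fin d → ℝ) : ℝ :=
  (2 * Real.pi) ^ (-(d : ℝ) / 2) * Real.exp (-(∑ i, (p i) ^ 2) / 2)

/-- Momentum-averaging projection `Π u (q) = ∫ u(q,p) f_P(p) dp`. -/
def proj {d : ℕ} (u : (Fin d → ℝ) × (Fin d → ℝ) → ℝ) (q : Fin d → ℝ) : ℝ :=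
  ∫ p : Fin d → ℝ, u (q, p) * fP p

/-- Backward Smoluchowski generator `A_{Smol} = Δ_q − ∇_q V·∇_q` (β = 1). -/
def ASmol {d : ℕ} (V g : (Fin d → ℝ) → ℝ) (q : Fin d → ℝ) : ℝ :=
  (∑ i, pd i (pd i g) q) - ∑ i, pd i V q * pd i g q


open MeasureTheory Real Filter Topology


lemma exp_eq (t : ℝ) : Real.exp (-t^2/2) = Real.exp (-(1/2) * t^2) := by ring_nf

lemma integrable_exp1 : Integrable (fun t : ℝ => Real.exp (-t^2/2)) := by
  simp_rw [exp_eq]; exact integrable_exp_neg_mul_sq (by norm_num)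

lemma integrable_mul_exp1 : Integrable (fun t : ℝ => t * Real.exp (-t^2/2)) := by
  simp_rw [exp_eq]; exact integrable_mul_exp_neg_mul_sq (by norm_num)

lemma integrable_sq_mul_exp1 : Integrable (fun t : ℝ => t^2 * Real.exp (-t^2/2)) := by
  simp_rw [exp_eq]
  have := integrable_rpow_mul_exp_neg_mul_sq (b := 1/2) (by norm_num) (s := 2) (by norm_num)
  simpa [Real.rpow_natCast] using this

lemma integral_exp1 : ∫ t : ℝ, Real.exp (-t^2/2) = Real.sqrt (2 * Real.pi) := by
  simp_rw [exp_eq]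
  rw [integral_gaussian]
  rw [show Real.pi / (1/2) = 2 * Real.pi by ring]

lemma tendsto_sq_atTop : Tendsto (fun t : ℝ => -t^2/2) atTop atBot := by
  have h : Tendsto (fun t : ℝ => t^2) atTop atTop := tendsto_pow_atTop two_ne_zero
  have h2 := h.atTop_div_const (two_pos)
  rw [show (fun t : ℝ => -t^2/2) = fun t : ℝ => -(t^2/2) by funext t; ring]
  exact tendsto_neg_atBot_iff.mpr h2

lemma tendsto_sq_atBot : Tendsto (fun t : ℝ => -t^2/2) atBot atBot := by
  have h : Tendsto (fun t : ℝ => -t^2/2) atBot atBot := by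
    have := tendsto_sq_atTop.comp tendsto_abs_atBot_atTop
    rw [show ((fun t : ℝ => -t^2/2) ∘ abs) = fun t : ℝ => -t^2/2 by funext t; simp [Function.comp, sq_abs]] at this
    exact this
  exact h

lemma tendsto_negexp_top : Tendsto (fun t : ℝ => -Real.exp (-t^2/2)) atTop (𝓝 (0:ℝ)) := by
  have := Real.tendsto_exp_comp_nhds_zero.mpr tendsto_sq_atTop
  simpa using this.neg

lemma tendsto_negexp_bot : Tendsto (fun t : ℝ => -Real.exp (-t^2/2)) atBot (𝓝 (0:ℝ)) := by
  have := Real.tendsto_exp_comp_nhds_zero.mpr tendsto_sq_atBot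
  simpa using this.neg

lemma hasDeriv_negexp (t : ℝ) :
    HasDerivAt (fun t : ℝ => -Real.exp (-t^2/2)) (t * Real.exp (-t^2/2)) t := by
  have h1 : HasDerivAt (fun t : ℝ => -t^2/2) (-t) t := by
    have : HasDerivAt (fun x : ℝ => -x^2/2) (-((2:ℕ) * t ^ (2 - 1)) / 2) t :=
      ((hasDerivAt_pow 2 t).neg).div_const 2
    convert this using 1
    push_cast
    ring
  have h2 : HasDerivAt (fun t : ℝ => -Real.exp (-t^2/2)) (-(Real.exp (-t^2/2) * -t)) t :=
    by have := ((Real.hasDerivAt_exp (-t^2/2)).comp t h1).neg; exact this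
  convert h2 using 1
  simp [Function.comp]
  ring

lemma integral_mul_exp1 : ∫ t : ℝ, t * Real.exp (-t^2/2) = 0 := by
  have h := MeasureTheory.integral_of_hasDerivAt_of_tendsto (f := fun t : ℝ => -Real.exp (-t^2/2))
    (f' := fun t => t * Real.exp (-t^2/2)) hasDeriv_negexp integrable_mul_exp1
    tendsto_negexp_bot tendsto_negexp_top
  simpa using h

lemma tendsto_mulexp_top' : Tendsto (fun t : ℝ => t * Real.exp (-t^2/2)) atTop (𝓝 (0:ℝ)) := by
  have h := rpow_mul_exp_neg_mul_sq_isLittleO_exp_neg (b := 1/2) (by norm_num) 1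
  have hexp : Tendsto (fun x : ℝ => Real.exp (-(1/2) * x)) atTop (𝓝 0) := by
    apply Real.tendsto_exp_comp_nhds_zero.mpr
    have h1 : Tendsto (fun x : ℝ => (1/2 : ℝ) * x) atTop atTop :=
      Tendsto.const_mul_atTop (by norm_num) tendsto_id
    have := tendsto_neg_atBot_iff.mpr h1
    exact this.congr (fun x => by ring)
  have h2 := h.isBigO.trans_tendsto hexp
  have heq : (fun x : ℝ => x ^ (1:ℝ) * Real.exp (-(1/2) * x ^ 2)) =ᶠ[atTop] fun t : ℝ => t * Real.exp (-t^2/2) := by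
    filter_upwards [eventually_ge_atTop (0:ℝ)] with x hx
    rw [Real.rpow_one]; ring_nf
  exact (Filter.tendsto_congr' heq).mp h2

lemma tendsto_mulexp_bot' : Tendsto (fun t : ℝ => t * Real.exp (-t^2/2)) atBot (𝓝 (0:ℝ)) := by
  have h := tendsto_mulexp_top'.comp tendsto_neg_atBot_atTop
  have e : ((fun t : ℝ => t * Real.exp (-t^2/2)) ∘ Neg.neg) = fun t : ℝ => -(t * Real.exp (-t^2/2)) := by
    funext t
    simp only [Function.comp_apply, neg_sq]
    ring
  rw [e] at h
  simpa using h.neg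

lemma tendsto_mulexp_top : Tendsto (fun t : ℝ => t * -Real.exp (-t^2/2)) atTop (𝓝 (0:ℝ)) := by
  have h : (fun t : ℝ => t * -Real.exp (-t^2/2)) = fun t : ℝ => -(t * Real.exp (-t^2/2)) := by
    funext t; ring
  rw [h]
  simpa using tendsto_mulexp_top'.neg

lemma integral_sq_mul_exp1 : ∫ t : ℝ, t^2 * Real.exp (-t^2/2) = Real.sqrt (2 * Real.pi) := by
  have e1 : ((fun t : ℝ => t) * fun t => t * Real.exp (-t^2/2)) = fun t : ℝ => t^2 * Real.exp (-t^2/2) := by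
    funext t; simp only [Pi.mul_apply]; ring
  have e2 : ((fun _ : ℝ => (1:ℝ)) * fun t => -Real.exp (-t^2/2)) = fun t : ℝ => -Real.exp (-t^2/2) := by
    funext t; simp
  have e4 : ((fun t : ℝ => t) * fun t => -Real.exp (-t^2/2)) = fun t : ℝ => t * -Real.exp (-t^2/2) := by
    funext t; simp only [Pi.mul_apply]
  have h := MeasureTheory.integral_mul_deriv_eq_deriv_mul (u := fun t : ℝ => t) (u' := fun _ => 1)
    (v := fun t => -Real.exp (-t^2/2)) (v' := fun t => t * Real.exp (-t^2/2))
    (fun t _ => hasDerivAt_id t) (fun t _ => hasDeriv_negexp t)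
    (by rw [e1]; exact integrable_sq_mul_exp1)
    (by rw [e2]; exact integrable_exp1.neg)
    (a' := 0) (b' := 0)
    (by rw [e4]
        have h : (fun t : ℝ => t * -Real.exp (-t^2/2)) = fun t : ℝ => -(t * Real.exp (-t^2/2)) := by
          funext t; ring
        rw [h]
        simpa using tendsto_mulexp_bot'.neg)
    (by rw [e4]; exact tendsto_mulexp_top)
  have e3 : (fun t : ℝ => t * (t * Real.exp (-t^2/2))) = fun t : ℝ => t^2 * Real.exp (-t^2/2) := by
    funext t; ring
  simp only [e3] at h
  rw [h]
  simp only [one_mul]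
  rw [integral_neg, integral_exp1]
  ring

def g1 (t : ℝ) : ℝ := (2 * Real.pi) ^ (-(1:ℝ)/2) * Real.exp (-t^2/2)

lemma c1_mul_sqrt : ((2 * Real.pi) ^ (-(1:ℝ)/2) : ℝ) * Real.sqrt (2 * Real.pi) = 1 := by
  have h2π : (0:ℝ) < 2 * Real.pi := by positivity
  rw [Real.sqrt_eq_rpow, ← Real.rpow_add h2π]
  norm_num

lemma integral_g1 : ∫ t : ℝ, g1 t = 1 := by
  unfold g1
  rw [integral_const_mul, integral_exp1, c1_mul_sqrt]

lemma integral_mul_g1 : ∫ t : ℝ, t * g1 t = 0 := by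
  unfold g1
  simp_rw [show ∀ t : ℝ, t * ((2 * Real.pi) ^ (-(1:ℝ)/2) * Real.exp (-t^2/2))
      = (2 * Real.pi) ^ (-(1:ℝ)/2) * (t * Real.exp (-t^2/2)) from fun t => by ring]
  rw [integral_const_mul, integral_mul_exp1, mul_zero]

lemma integral_sq_mul_g1 : ∫ t : ℝ, t^2 * g1 t = 1 := by
  unfold g1
  simp_rw [show ∀ t : ℝ, t^2 * ((2 * Real.pi) ^ (-(1:ℝ)/2) * Real.exp (-t^2/2))
      = (2 * Real.pi) ^ (-(1:ℝ)/2) * (t^2 * Real.exp (-t^2/2)) from fun t => by ring]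
  rw [integral_const_mul, integral_sq_mul_exp1, c1_mul_sqrt]

lemma integrable_g1 : Integrable g1 := integrable_exp1.const_mul _

lemma integrable_mul_g1 : Integrable (fun t => t * g1 t) := by
  unfold g1
  simp_rw [show ∀ t : ℝ, t * ((2 * Real.pi) ^ (-(1:ℝ)/2) * Real.exp (-t^2/2))
      = (2 * Real.pi) ^ (-(1:ℝ)/2) * (t * Real.exp (-t^2/2)) from fun t => by ring]
  exact integrable_mul_exp1.const_mul _

lemma integrable_sq_mul_g1 : Integrable (fun t => t^2 * g1 t) := by
  unfold g1
  simp_rw [show ∀ t : ℝ, t^2 * ((2 * Real.pi) ^ (-(1:ℝ)/2) * Real.exp (-t^2/2))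
      = (2 * Real.pi) ^ (-(1:ℝ)/2) * (t^2 * Real.exp (-t^2/2)) from fun t => by ring]
  exact integrable_sq_mul_exp1.const_mul _

lemma fP_eq_prod {d : ℕ} (p : Fin d → ℝ) : fP p = ∏ i, g1 (p i) := by
  unfold fP g1
  rw [Finset.prod_mul_distrib, Finset.prod_const]
  have h2π : (0:ℝ) ≤ 2 * Real.pi := by positivity
  have hc : ((2 * Real.pi) ^ (-(1:ℝ)/2) : ℝ) ^ (d : ℕ) = (2 * Real.pi) ^ (-(d:ℝ)/2) := by
    rw [← Real.rpow_natCast (((2 * Real.pi) ^ (-(1:ℝ)/2) : ℝ)) d, ← Real.rpow_mul h2π]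
    congr 1
    push_cast
    ring
  rw [Finset.card_univ, Fintype.card_fin, hc]
  congr 1
  rw [← Real.exp_sum]
  congr 1
  rw [← Finset.sum_div, ← Finset.sum_neg_distrib]

-- the pointwise product identities
lemma prod_single_eq {d : ℕ} (i : Fin d) (p : Fin d → ℝ) :
    ∏ k, ((if k = i then p k else 1) * g1 (p k)) = p i * fP p := by
  rw [Finset.prod_mul_distrib, Finset.prod_ite_eq', fP_eq_prod]
  simp

lemma prod_pair_eq {d : ℕ} (i j : Fin d) (p : Fin d → ℝ) :
    ∏ k, ((if k = i then p k else 1) * (if k = j then p k else 1) * g1 (p k))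
      = p i * p j * fP p := by
  rw [Finset.prod_mul_distrib, Finset.prod_mul_distrib, Finset.prod_ite_eq', Finset.prod_ite_eq',
    fP_eq_prod]
  simp

lemma integrable_fP {d : ℕ} : Integrable (fP (d := d)) := by
  have := MeasureTheory.Integrable.fintype_prod (𝕜 := ℝ) (f := fun _ : Fin d => g1)
    (fun _ => integrable_g1)
  exact this.congr (Filter.Eventually.of_forall fun p => (fP_eq_prod p).symm ▸ rfl)

lemma integrable_single_fP {d : ℕ} (i : Fin d) :
    Integrable (fun p : Fin d → ℝ => p i * fP p) := by
  have hint : ∀ k : Fin d, Integrable (fun t : ℝ => (if k = i then t else 1) * g1 t) := by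
    intro k
    by_cases h : k = i <;> simp [h, integrable_mul_g1, integrable_g1]
  have := MeasureTheory.Integrable.fintype_prod (𝕜 := ℝ)
    (f := fun k : Fin d => fun t : ℝ => (if k = i then t else 1) * g1 t) hint
  exact this.congr (Filter.Eventually.of_forall fun p => prod_single_eq i p)

lemma integrable_pair_fP {d : ℕ} (i j : Fin d) :
    Integrable (fun p : Fin d → ℝ => p i * p j * fP p) := by
  have hint : ∀ k : Fin d, Integrable
      (fun t : ℝ => (if k = i then t else 1) * (if k = j then t else 1) * g1 t) := by
    intro k
    by_cases h : k = i <;> by_cases h' : k = j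
    · have e : (fun t : ℝ => (if k = i then t else 1) * (if k = j then t else 1) * g1 t)
          = fun t : ℝ => t^2 * g1 t := by
        funext t; rw [if_pos h, if_pos h']; ring
      rw [e]; exact integrable_sq_mul_g1
    · have e : (fun t : ℝ => (if k = i then t else 1) * (if k = j then t else 1) * g1 t)
          = fun t : ℝ => t * g1 t := by
        funext t; rw [if_pos h, if_neg h']; ring
      rw [e]; exact integrable_mul_g1
    · have e : (fun t : ℝ => (if k = i then t else 1) * (if k = j then t else 1) * g1 t)
          = fun t : ℝ => t * g1 t := by
        funext t; rw [if_neg h, if_pos h']; ring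
      rw [e]; exact integrable_mul_g1
    · have e : (fun t : ℝ => (if k = i then t else 1) * (if k = j then t else 1) * g1 t)
          = g1 := by
        funext t; rw [if_neg h, if_neg h']; ring
      rw [e]; exact integrable_g1
  have := MeasureTheory.Integrable.fintype_prod (𝕜 := ℝ)
    (f := fun k : Fin d => fun t : ℝ =>
      (if k = i then t else 1) * (if k = j then t else 1) * g1 t) hint
  exact this.congr (Filter.Eventually.of_forall fun p => prod_pair_eq i j p)

lemma integral_fP {d : ℕ} : ∫ p : Fin d → ℝ, fP p = 1 := by
  rw [show (fun p : Fin d → ℝ => fP p) = fun p => ∏ i, g1 (p i) from funext fP_eq_prod]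
  rw [MeasureTheory.integral_fintype_prod_volume_eq_prod (f := fun _ : Fin d => g1)]
  simp [integral_g1]

lemma integral_single_fP {d : ℕ} (i : Fin d) : ∫ p : Fin d → ℝ, p i * fP p = 0 := by
  rw [show (fun p : Fin d → ℝ => p i * fP p)
      = fun p => ∏ k, ((if k = i then p k else 1) * g1 (p k)) from
    funext fun p => (prod_single_eq i p).symm]
  rw [MeasureTheory.integral_fintype_prod_volume_eq_prod
    (f := fun k : Fin d => fun t : ℝ => (if k = i then t else 1) * g1 t)]
  apply Finset.prod_eq_zero (Finset.mem_univ i)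
  simp [integral_mul_g1]

lemma integral_pair_fP {d : ℕ} (i j : Fin d) :
    ∫ p : Fin d → ℝ, p i * p j * fP p = if i = j then 1 else 0 := by
  rw [show (fun p : Fin d → ℝ => p i * p j * fP p)
      = fun p => ∏ k, ((if k = i then p k else 1) * (if k = j then p k else 1) * g1 (p k)) from
    funext fun p => (prod_pair_eq i j p).symm]
  rw [MeasureTheory.integral_fintype_prod_volume_eq_prod
    (f := fun k : Fin d => fun t : ℝ =>
      (if k = i then t else 1) * (if k = j then t else 1) * g1 t)]
  by_cases hij : i = j
  · subst hij
    simp only [if_pos rfl]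
    apply Finset.prod_eq_one
    intro k _
    by_cases h : k = i
    · have e : (fun t : ℝ => (if k = i then t else 1) * (if k = i then t else 1) * g1 t)
          = fun t : ℝ => t^2 * g1 t := by
        funext t; rw [if_pos h]; ring
      rw [e]; exact integral_sq_mul_g1
    · have e : (fun t : ℝ => (if k = i then t else 1) * (if k = i then t else 1) * g1 t)
          = g1 := by
        funext t; rw [if_neg h]; ring
      rw [e]; exact integral_g1
  · rw [if_neg hij]
    apply Finset.prod_eq_zero (Finset.mem_univ i)
    have e : (fun t : ℝ => (if i = i then t else 1) * (if i = j then t else 1) * g1 t)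
        = fun t : ℝ => t * g1 t := by
      funext t; rw [if_pos rfl, if_neg hij]; ring
    rw [e]; exact integral_mul_g1
variable {d : ℕ}

lemma contDiff_pd {f : (Fin d → ℝ) → ℝ} (hf : ContDiff ℝ (⊤ : ℕ∞) f) (i : Fin d) :
    ContDiff ℝ (⊤ : ℕ∞) (pd i f) := by
  have h1 : ContDiff ℝ (⊤ : ℕ∞) (fderiv ℝ f) := hf.fderiv_right (by simp)
  exact h1.clm_apply contDiff_const

lemma hasFDerivAt_comp_fst {h : (Fin d → ℝ) → ℝ} (hh : Differentiable ℝ h)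
    (x : (Fin d → ℝ) × (Fin d → ℝ)) :
    HasFDerivAt (fun y : (Fin d → ℝ) × (Fin d → ℝ) => h y.1)
      ((fderiv ℝ h x.1).comp (ContinuousLinearMap.fst ℝ (Fin d → ℝ) (Fin d → ℝ))) x :=
  (hh x.1).hasFDerivAt.comp x hasFDerivAt_fst

lemma pq_comp_fst {h : (Fin d → ℝ) → ℝ} (hh : Differentiable ℝ h) (i : Fin d)
    (x : (Fin d → ℝ) × (Fin d → ℝ)) :
    pq i (fun y => h y.1) x = pd i h x.1 := by
  unfold pq pd
  rw [(hasFDerivAt_comp_fst hh x).fderiv]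
  rfl

lemma pp_comp_fst {h : (Fin d → ℝ) → ℝ} (hh : Differentiable ℝ h) (i : Fin d)
    (x : (Fin d → ℝ) × (Fin d → ℝ)) :
    pp i (fun y => h y.1) x = 0 := by
  unfold pp
  rw [(hasFDerivAt_comp_fst hh x).fderiv]
  simp

/-- derivative of `G(x) = ∑ i, x.2 i * pd i f x.1` -/
def DG (f : (Fin d → ℝ) → ℝ) (x : (Fin d → ℝ) × (Fin d → ℝ)) :
    ((Fin d → ℝ) × (Fin d → ℝ)) →L[ℝ] ℝ :=
  ∑ i, (x.2 i • ((fderiv ℝ (pd i f) x.1).comp (ContinuousLinearMap.fst ℝ (Fin d → ℝ) (Fin d → ℝ)))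
    + (pd i f x.1) • ((ContinuousLinearMap.proj i).comp
        (ContinuousLinearMap.snd ℝ (Fin d → ℝ) (Fin d → ℝ))))

lemma hasFDerivAt_G {f : (Fin d → ℝ) → ℝ} (hf : ContDiff ℝ (⊤ : ℕ∞) f)
    (x : (Fin d → ℝ) × (Fin d → ℝ)) :
    HasFDerivAt (fun y : (Fin d → ℝ) × (Fin d → ℝ) => ∑ i, y.2 i * pd i f y.1) (DG f x) x := by
  apply HasFDerivAt.fun_sum
  intro i _
  have hc : HasFDerivAt (fun y : (Fin d → ℝ) × (Fin d → ℝ) => y.2 i)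
      ((ContinuousLinearMap.proj i).comp (ContinuousLinearMap.snd ℝ (Fin d → ℝ) (Fin d → ℝ))) x :=
    ((ContinuousLinearMap.proj i).comp
      (ContinuousLinearMap.snd ℝ (Fin d → ℝ) (Fin d → ℝ))).hasFDerivAt
  have hd : HasFDerivAt (fun y : (Fin d → ℝ) × (Fin d → ℝ) => pd i f y.1)
      ((fderiv ℝ (pd i f) x.1).comp (ContinuousLinearMap.fst ℝ (Fin d → ℝ) (Fin d → ℝ))) x :=
    hasFDerivAt_comp_fst ((contDiff_pd hf i).differentiable (by simp)) x
  exact hc.mul hd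

lemma pq_G {f : (Fin d → ℝ) → ℝ} (hf : ContDiff ℝ (⊤ : ℕ∞) f) (j : Fin d)
    (x : (Fin d → ℝ) × (Fin d → ℝ)) :
    pq j (fun y => ∑ i, y.2 i * pd i f y.1) x = ∑ i, x.2 i * pd j (pd i f) x.1 := by
  unfold pq
  rw [(hasFDerivAt_G hf x).fderiv]
  unfold DG
  simp [ContinuousLinearMap.sum_apply, pd]

lemma pp_G {f : (Fin d → ℝ) → ℝ} (hf : ContDiff ℝ (⊤ : ℕ∞) f) (j : Fin d)
    (x : (Fin d → ℝ) × (Fin d → ℝ)) :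
    pp j (fun y => ∑ i, y.2 i * pd i f y.1) x = pd j f x.1 := by
  unfold pp
  rw [(hasFDerivAt_G hf x).fderiv]
  unfold DG
  simp [ContinuousLinearMap.sum_apply, Pi.single_apply]

lemma pp_pp_G {f : (Fin d → ℝ) → ℝ} (hf : ContDiff ℝ (⊤ : ℕ∞) f) (j : Fin d)
    (x : (Fin d → ℝ) × (Fin d → ℝ)) :
    pp j (pp j (fun y => ∑ i, y.2 i * pd i f y.1)) x = 0 := by
  have e : pp j (fun y : (Fin d → ℝ) × (Fin d → ℝ) => ∑ i, y.2 i * pd i f y.1)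
      = fun x : (Fin d → ℝ) × (Fin d → ℝ) => pd j f x.1 := funext (pp_G hf j)
  rw [e]
  exact pp_comp_fst ((contDiff_pd hf j).differentiable (by simp)) j x

lemma pp_zero_fun (i : Fin d) (x : (Fin d → ℝ) × (Fin d → ℝ)) :
    pp i (fun _ : (Fin d → ℝ) × (Fin d → ℝ) => (0:ℝ)) x = 0 := by
  unfold pp
  rw [fderiv_fun_const]
  simp


/-- **Lemma 4.3 (c) of the paper.** For smooth `f` depending only on `q`,
`Π A_{Lan} (Id − Π) A_{Lan} F = A_{Smol} f`. -/
theorem mori_zwanzig_smoluchowski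
    (d : ℕ) (ε : ℝ) (hε : 0 < ε)
    (V f : (Fin d → ℝ) → ℝ) (hV : ContDiff ℝ (⊤ : ℕ∞) V) (hf : ContDiff ℝ (⊤ : ℕ∞) f)
    (F : (Fin d → ℝ) × (Fin d → ℝ) → ℝ) (hF : ∀ q p, F (q, p) = f q) :
    ∀ q : Fin d → ℝ,
      proj (fun x => ALan ε V (fun y => ALan ε V F y - proj (ALan ε V F) y.1) x) q
        = ASmol V f q := by
  intro q
  have hfd : Differentiable ℝ f := hf.differentiable (by simp)
  -- F is f ∘ fst
  have hF' : F = fun y => f y.1 := funext fun y => by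
    have := hF y.1 y.2; simpa using this
  -- ALan ε V F = G
  have hALanF : ALan ε V F = fun x => ∑ i, x.2 i * pd i f x.1 := by
    funext x
    unfold ALan
    rw [hF']
    have h1 : ∀ i : Fin d, pq i (fun y : (Fin d → ℝ) × (Fin d → ℝ) => f y.1) x = pd i f x.1 :=
      fun i => pq_comp_fst hfd i x
    have h2 : ∀ i : Fin d, pp i (fun y : (Fin d → ℝ) × (Fin d → ℝ) => f y.1) x = 0 :=
      fun i => pp_comp_fst hfd i x
    have h3 : ∀ i : Fin d, pp i (pp i (fun y : (Fin d → ℝ) × (Fin d → ℝ) => f y.1)) x = 0 := by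
      intro i
      have e : pp i (fun y : (Fin d → ℝ) × (Fin d → ℝ) => f y.1)
          = fun _ : (Fin d → ℝ) × (Fin d → ℝ) => (0:ℝ) :=
        funext fun z => pp_comp_fst hfd i z
      rw [e]
      exact pp_zero_fun i x
    simp [h1, h2, h3]
  -- proj (ALan ε V F) = 0
  have hproj0 : ∀ q' : Fin d → ℝ, proj (ALan ε V F) q' = 0 := by
    intro q'
    unfold proj
    rw [hALanF]
    have e : (fun p : Fin d → ℝ => (∑ i, p i * pd i f q') * fP p)
        = fun p : Fin d → ℝ => ∑ i, pd i f q' * (p i * fP p) := by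
      funext p
      rw [Finset.sum_mul]
      congr 1; funext i; ring
    rw [e, integral_finset_sum _ (fun i _ => (integrable_single_fP i).const_mul _)]
    simp [integral_const_mul, integral_single_fP]
  -- the inner function is G
  have hinner : (fun y => ALan ε V F y - proj (ALan ε V F) y.1)
      = fun y : (Fin d → ℝ) × (Fin d → ℝ) => ∑ i, y.2 i * pd i f y.1 := by
    funext y
    rw [hproj0, hALanF]
    simp
  rw [hinner]
  -- compute ALan ε V G
  have hALanG : ∀ x : (Fin d → ℝ) × (Fin d → ℝ),
      ALan ε V (fun y => ∑ i, y.2 i * pd i f y.1) x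
        = (∑ j, x.2 j * ∑ i, x.2 i * pd j (pd i f) x.1)
          - (∑ j, pd j V x.1 * pd j f x.1)
          - ε⁻¹ * ∑ j, x.2 j * pd j f x.1 := by
    intro x
    unfold ALan
    simp only [pq_G hf, pp_G hf, pp_pp_G hf]
    simp
    ring
  -- final integral
  unfold proj
  rw [show (fun p : Fin d → ℝ =>
      ALan ε V (fun y => ∑ i, y.2 i * pd i f y.1) (q, p) * fP p)
      = fun p : Fin d → ℝ =>
        (∑ j, ∑ i, pd j (pd i f) q * (p j * p i * fP p))
        - (∑ j, pd j V q * pd j f q) * fP p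
        - ε⁻¹ * ∑ j, pd j f q * (p j * fP p) from funext fun p => by
    rw [hALanG (q, p)]
    rw [sub_mul, sub_mul, mul_assoc]
    have e1 : (∑ j, (q,p).2 j * ∑ i, (q,p).2 i * pd j (pd i f) (q,p).1) * fP p
        = ∑ j, ∑ i, pd j (pd i f) q * (p j * p i * fP p) := by
      rw [Finset.sum_mul]
      refine Finset.sum_congr rfl fun j _ => ?_
      rw [Finset.mul_sum, Finset.sum_mul]
      refine Finset.sum_congr rfl fun i _ => ?_
      ring
    have e2 : (∑ j, pd j V (q,p).1 * pd j f (q,p).1) * fP p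
        = (∑ j, pd j V q * pd j f q) * fP p := rfl
    have e3 : (∑ j, (q,p).2 j * pd j f (q,p).1) * fP p
        = ∑ j, pd j f q * (p j * fP p) := by
      rw [Finset.sum_mul]
      refine Finset.sum_congr rfl fun j _ => ?_
      ring
    rw [e1, e2, e3]]
  have hA : Integrable (fun p : Fin d → ℝ =>
      ∑ j, ∑ i, pd j (pd i f) q * (p j * p i * fP p)) :=
    integrable_finset_sum _ fun j _ =>
      integrable_finset_sum _ fun i _ => (integrable_pair_fP j i).const_mul _
  have hB : Integrable (fun p : Fin d → ℝ => (∑ j, pd j V q * pd j f q) * fP p) :=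
    integrable_fP.const_mul _
  have hC : Integrable (fun p : Fin d → ℝ => ε⁻¹ * ∑ j, pd j f q * (p j * fP p)) :=
    (integrable_finset_sum _ fun j _ => (integrable_single_fP j).const_mul _).const_mul _
  have hAB : Integrable (fun p : Fin d → ℝ =>
      (∑ j, ∑ i, pd j (pd i f) q * (p j * p i * fP p))
        - (∑ j, pd j V q * pd j f q) * fP p) := hA.sub hB
  rw [integral_sub hAB hC, integral_sub hA hB]
  rw [integral_finset_sum _ (fun j _ =>
    integrable_finset_sum _ fun i _ => (integrable_pair_fP j i).const_mul _)]
  rw [Finset.sum_congr rfl fun j _ => integral_finset_sum _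
    (fun i _ => (integrable_pair_fP j i).const_mul _)]
  simp only [integral_const_mul, integral_pair_fP, integral_fP, integral_single_fP,
    mul_ite, mul_one, mul_zero, Finset.sum_ite_eq, Finset.mem_univ, if_true,
    Finset.sum_const_zero]
  rw [integral_finset_sum _ (fun j _ => (integrable_single_fP j).const_mul _)]
  simp only [integral_const_mul, integral_single_fP, mul_zero, Finset.sum_const_zero, sub_zero]
  unfold ASmol
  ring

end
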